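/- arXiv:1801.10465 — 4 statements merged into one kernel-verified Lean document; each statement's English description precedes it below -/
import Mathlib

section
/- On the 3×2 grid graph, every multi-robot path planning instance is solvable: for every bijection π of the six vertices there is a sequence of valid moves taking the identity configuration to π. Moreover, there is an absolute constant C such that every such instance has a solution of makespan at most C. -/
/-- The `m₁ × m₂` grid graph: vertices are pairs, adjacent iff they differ
by exactly 1 in exactly one coordinate. -/
def Grid2 (m₁ m₂ : ℕ) : SimpleGraph (Fin m₁ × Fin m₂) where
  Adj a b := (((a.1 : ℤ) - (b.1 : ℤ)).natAbs = 1 ∧ a.2 = b.2) ∨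
             (a.1 = b.1 ∧ ((a.2 : ℤ) - (b.2 : ℤ)).natAbs = 1)
  symm := by
    constructor
    rintro a b (⟨h1, h2⟩ | ⟨h1, h2⟩)
    · exact Or.inl ⟨by omega, h2.symm⟩
    · exact Or.inr ⟨h1.symm, by omega⟩
  loopless := by
    constructor
    rintro a (⟨h1, _⟩ | ⟨_, h1⟩) <;> simp at h1

/-- A valid synchronous move between two configurations: each robot stays or
moves to an adjacent vertex, and no two robots swap along an edge. -/
def ValidMove {V : Type*} (G : SimpleGraph V) (X X' : Equiv.Perm V) : Prop :=
  (∀ i, X' i = X i ∨ G.Adj (X i) (X' i)) ∧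
  (∀ i j, i ≠ j → X i = X' j → X j ≠ X' i)

/-- `SolvableIn G XI XG t` : there is a solution of makespan `t` for the MPP
instance `(G, XI, XG)`. -/
def SolvableIn {V : Type*} (G : SimpleGraph V) (XI XG : Equiv.Perm V) (t : ℕ) : Prop :=
  ∃ Xs : ℕ → Equiv.Perm V, Xs 0 = XI ∧ Xs t = XG ∧
    ∀ s < t, ValidMove G (Xs s) (Xs (s + 1))

/-!
Applying one permutation `r` of the vertices to all robots at once is a valid move as soon as `r`
sends every vertex to itself or a neighbour and has no 2-cycles; rotating along a cycle of the
grid is such a move. The configurations reachable from the identity form a monoid (a solution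
can be relabelled by right multiplication and then concatenated), and in a finite group the
monoid generated by a set is the group it generates. On the `3 × 2` grid the rotations along
the boundary 6-cycle `c` and the two unit squares `a` (left) and `b` (right) generate the
symmetric group, since `c⁻¹ * b * a` is the transposition of two adjacent vertices of `c`.
Finitely many instances then have a common bound on their makespans.
-/

open Equiv

namespace ValidMove

variable {V : Type*} {G : SimpleGraph V}

theorem mul_right {X X' : Perm V} (h : ValidMove G X X') (σ : Perm V) :
    ValidMove G (X * σ) (X' * σ) :=
  ⟨fun i => h.1 (σ i), fun i j hij => h.2 (σ i) (σ j) (σ.injective.ne hij)⟩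

end ValidMove

def IsSwapFreeStep {V : Type*} (G : SimpleGraph V) (r : Perm V) : Prop :=
  (∀ v, r v = v ∨ G.Adj v (r v)) ∧ ∀ v, r (r v) = v → r v = v

theorem IsSwapFreeStep.validMove {V : Type*} {G : SimpleGraph V} {r : Perm V}
    (hr : IsSwapFreeStep G r) (X : Perm V) : ValidMove G X (r * X) := by
  refine ⟨fun i => hr.1 (X i), fun i j hij (hi : X i = r (X j)) (hj : X j = r (X i)) => hij ?_⟩
  have hfix : r (X j) = X j := hr.2 (X j) (by rw [← hi, ← hj])
  exact X.injective (hi.trans hfix)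

namespace SolvableIn

variable {V : Type*} {G : SimpleGraph V}

theorem refl (X : Perm V) : SolvableIn G X X 0 :=
  ⟨fun _ => X, rfl, rfl, fun _ h => absurd h (Nat.not_lt_zero _)⟩

theorem single {X Y : Perm V} (h : ValidMove G X Y) : SolvableIn G X Y 1 :=
  ⟨fun s => if s = 0 then X else Y, rfl, rfl, fun s hs => by
    obtain rfl := Nat.lt_one_iff.mp hs
    exact h⟩

theorem trans {X Y Z : Perm V} {s t : ℕ} (h₁ : SolvableIn G X Y s) (h₂ : SolvableIn G Y Z t) :
    SolvableIn G X Z (s + t) := by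
  obtain ⟨Xs, hX0, hXs, hXm⟩ := h₁
  obtain ⟨Ys, hY0, hYt, hYm⟩ := h₂
  have hlate : ∀ u, s ≤ u → (if u ≤ s then Xs u else Ys (u - s)) = Ys (u - s) := by
    intro u hu
    rcases hu.eq_or_lt with rfl | hlt
    · simp [hXs, hY0]
    · simp [hlt.not_ge]
  refine ⟨fun u => if u ≤ s then Xs u else Ys (u - s), by simp [hX0], ?_, fun u hu => ?_⟩
  · beta_reduce
    rw [hlate _ (Nat.le_add_right s t), Nat.add_sub_cancel_left, hYt]
  by_cases hus : u < s
  · simpa [hus.le, Nat.succ_le_of_lt hus] using hXm u hus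
  · beta_reduce
    rw [hlate u (by omega), hlate (u + 1) (by omega), Nat.sub_add_comm (by omega : s ≤ u)]
    exact hYm (u - s) (by omega)

theorem mul_right {X Y : Perm V} {t : ℕ} (h : SolvableIn G X Y t) (σ : Perm V) :
    SolvableIn G (X * σ) (Y * σ) t := by
  obtain ⟨Xs, h0, ht, hm⟩ := h
  exact ⟨fun s => Xs s * σ, congrArg (· * σ) h0, congrArg (· * σ) ht,
    fun s hs => (hm s hs).mul_right σ⟩

end SolvableIn

def reachableConfigs {V : Type*} (G : SimpleGraph V) : Submonoid (Perm V) where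
  carrier := {π | ∃ t, SolvableIn G 1 π t}
  one_mem' := ⟨0, SolvableIn.refl 1⟩
  mul_mem' := by
    rintro σ τ ⟨s, hσ⟩ ⟨t, hτ⟩
    exact ⟨t + s, hτ.trans (by simpa using hσ.mul_right τ)⟩

theorem IsSwapFreeStep.mem_reachableConfigs {V : Type*} {G : SimpleGraph V} {r : Perm V}
    (hr : IsSwapFreeStep G r) : r ∈ reachableConfigs G :=
  ⟨1, SolvableIn.single (by simpa using hr.validMove 1)⟩

theorem reachableConfigs_eq_top_of_closure_eq_top {V : Type*} [Finite V] {G : SimpleGraph V}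
    {S : Set (Perm V)} (hS : Subgroup.closure S = ⊤) (hstep : ∀ r ∈ S, IsSwapFreeStep G r) :
    reachableConfigs G = ⊤ := by
  rw [eq_top_iff, ← Subgroup.top_toSubmonoid, ← hS, Subgroup.closure_toSubmonoid_of_finite,
    Submonoid.closure_le]
  exact fun r hr => (hstep r hr).mem_reachableConfigs

def boundaryRotation : Perm (Fin 3 × Fin 2) :=
  [(0, 0), (1, 0), (2, 0), (2, 1), (1, 1), (0, 1)].formPerm

def leftSquareRotation : Perm (Fin 3 × Fin 2) :=
  [(0, 0), (1, 0), (1, 1), (0, 1)].formPerm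

def rightSquareRotation : Perm (Fin 3 × Fin 2) :=
  [(1, 0), (2, 0), (2, 1), (1, 1)].formPerm

def gridRotations : Set (Perm (Fin 3 × Fin 2)) :=
  {boundaryRotation, leftSquareRotation, rightSquareRotation}

theorem isSwapFreeStep_of_mem_gridRotations {r : Perm (Fin 3 × Fin 2)} (hr : r ∈ gridRotations) :
    IsSwapFreeStep (Grid2 3 2) r := by
  rcases hr with rfl | rfl | rfl <;> simp only [IsSwapFreeStep, Grid2] <;> decide

theorem closure_gridRotations_eq_top : Subgroup.closure gridRotations = ⊤ := by
  have hcycle : boundaryRotation.IsCycle := List.isCycle_formPerm (by decide) (by decide)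
  have hsupport : boundaryRotation.support = Finset.univ := by
    rw [boundaryRotation, List.support_formPerm_of_nodup _ (by decide) (by decide)]
    decide
  have hswap : swap (0, 0) (boundaryRotation (0, 0)) =
      boundaryRotation⁻¹ * rightSquareRotation * leftSquareRotation := by
    decide
  rw [eq_top_iff, ← Perm.closure_cycle_adjacent_swap hcycle hsupport (0, 0),
    Subgroup.closure_le, Set.insert_subset_iff, Set.singleton_subset_iff, hswap]
  have hsub : gridRotations ⊆ Subgroup.closure gridRotations := Subgroup.subset_closure
  have hboundary : boundaryRotation ∈ gridRotations := Or.inl rfl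
  have hleft : leftSquareRotation ∈ gridRotations := Or.inr (Or.inl rfl)
  have hright : rightSquareRotation ∈ gridRotations := Or.inr (Or.inr rfl)
  exact ⟨hsub hboundary,
    mul_mem (mul_mem (inv_mem (hsub hboundary)) (hsub hright)) (hsub hleft)⟩

/-- On the 3×2 grid every MPP instance (from the identity configuration to an
arbitrary bijection π) is solvable; moreover there is an absolute constant `C`
bounding the needed makespan. -/
theorem grid_3x2_all_instances_solvable_in_constant_makespan :
    (∀ π : Equiv.Perm (Fin 3 × Fin 2), ∃ t : ℕ, SolvableIn (Grid2 3 2) 1 π t) ∧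
    (∃ C : ℕ, ∀ π : Equiv.Perm (Fin 3 × Fin 2), ∃ t ≤ C, SolvableIn (Grid2 3 2) 1 π t) := by
  have hsolvable (π : Perm (Fin 3 × Fin 2)) : ∃ t, SolvableIn (Grid2 3 2) 1 π t := by
    have hall := reachableConfigs_eq_top_of_closure_eq_top closure_gridRotations_eq_top
      fun _ => isSwapFreeStep_of_mem_gridRotations
    exact (hall ▸ Submonoid.mem_top π : π ∈ reachableConfigs (Grid2 3 2))
  refine ⟨hsolvable, ?_⟩
  choose t ht using hsolvable
  obtain ⟨C, hC⟩ := Finite.exists_le t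
  exact ⟨C, fun π => ⟨t π, hC π, ht π⟩⟩
end

section
/- Circulation decomposition: let G = (V,E) be a finite simple graph, let f ≥ 1 be an integer, and let c be a circulation on G whose in-flow at every vertex is at most f. Then there exist circulations c_1, ..., c_f on G, each having in-flow at most 1 at every vertex (unit circulations), such that c = c_1 + ⋯ + c_f. -/
/-!
Add to a circulation `c` with in-flow at most `F + 1` the slack `F + 1 - in(v)` on the
diagonal. Conservation makes every row and column sum of the resulting matrix equal to
`F + 1`, so Hall's theorem gives a permutation `σ` inside its support. The arcs `u → σ u`
with `σ u ≠ u` form a unit circulation below `c`; removing it lowers the in-flow at every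
moved vertex by one, and a fixed point `v` of `σ` sits on slack (`G` has no loops), so its
in-flow was already at most `F`. Induction on the bound finishes the decomposition.
-/

/-- A circulation on a finite simple graph `G`: a natural-valued function on
ordered pairs that vanishes on non-edges and is conserved at every vertex. -/
def IsCirculation {V : Type*} [Fintype V] (G : SimpleGraph V) (c : V → V → ℕ) : Prop :=
  (∀ u v, ¬ G.Adj u v → c u v = 0) ∧
  (∀ v, ∑ u, c u v = ∑ w, c v w)

open Finset

theorem exists_perm_forall_ne_zero {ι : Type*} [Fintype ι] (M : ι → ι → ℕ) {s : ℕ}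
    (hs : 0 < s) (hrow : ∀ i, s ≤ ∑ j, M i j) (hcol : ∀ j, ∑ i, M i j ≤ s) :
    ∃ σ : Equiv.Perm ι, ∀ i, M i (σ i) ≠ 0 := by
  classical
  let N (i : ι) : Finset ι := {j | M i j ≠ 0}
  have hall (A : Finset ι) : #A ≤ #(A.biUnion N) := by
    refine Nat.le_of_mul_le_mul_left ?_ hs
    calc s * #A = ∑ _i ∈ A, s := by simp [mul_comm]
      _ ≤ ∑ i ∈ A, ∑ j, M i j := sum_le_sum fun i _ => hrow i
      _ = ∑ i ∈ A, ∑ j ∈ A.biUnion N, M i j := by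
        refine sum_congr rfl fun i hi => (sum_subset (subset_univ _) fun j _ hj => ?_).symm
        by_contra h
        exact hj (mem_biUnion.2 ⟨i, hi, by simpa [N] using h⟩)
      _ ≤ ∑ i, ∑ j ∈ A.biUnion N, M i j := sum_le_sum_of_subset (subset_univ _)
      _ = ∑ j ∈ A.biUnion N, ∑ i, M i j := sum_comm
      _ ≤ ∑ _j ∈ A.biUnion N, s := sum_le_sum fun j _ => hcol j
      _ = s * #(A.biUnion N) := by simp [mul_comm]
  obtain ⟨g, hg, hgN⟩ := (all_card_le_biUnion_card_iff_exists_injective N).1 hall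
  exact ⟨Equiv.ofBijective g (Finite.injective_iff_bijective.1 hg),
    fun i => by simpa [N] using hgN i⟩

section PermFlow

variable {V : Type*} [Fintype V] [DecidableEq V]

def permFlow (σ : Equiv.Perm V) (u v : V) : ℕ :=
  if σ u = v ∧ u ≠ v then 1 else 0

theorem sum_permFlow_left (σ : Equiv.Perm V) (v : V) :
    ∑ u, permFlow σ u v = if σ v = v then 0 else 1 := by
  rw [← σ.symm.sum_comp]
  simp [permFlow, ite_and, eq_comm, Equiv.eq_symm_apply]

theorem sum_permFlow_right (σ : Equiv.Perm V) (u : V) :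
    ∑ v, permFlow σ u v = if σ u = u then 0 else 1 := by
  simp [permFlow, ite_and, eq_comm]

theorem isCirculation_permFlow {G : SimpleGraph V} {c : V → V → ℕ} (hc : IsCirculation G c)
    {σ : Equiv.Perm V} (hσ : permFlow σ ≤ c) : IsCirculation G (permFlow σ) :=
  ⟨fun u v huv => Nat.eq_zero_of_le_zero (hc.1 u v huv ▸ hσ u v), fun v => by
    rw [sum_permFlow_left, sum_permFlow_right]⟩

end PermFlow

namespace IsCirculation

variable {V : Type*} [Fintype V] {G : SimpleGraph V} {c d : V → V → ℕ}

theorem tsub (hc : IsCirculation G c) (hd : IsCirculation G d) (hdc : d ≤ c) :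
    IsCirculation G (c - d) := by
  refine ⟨fun u v huv => by simp [hc.1 u v huv], fun v => ?_⟩
  simp only [Pi.sub_apply]
  rw [sum_tsub_distrib _ fun u _ => hdc u v, sum_tsub_distrib _ fun w _ => hdc v w,
    hc.2 v, hd.2 v]

theorem exists_unit_le_of_inflow_le (hc : IsCirculation G c) {F : ℕ}
    (hin : ∀ v, ∑ u, c u v ≤ F + 1) :
    ∃ d, IsCirculation G d ∧ (∀ v, ∑ u, d u v ≤ 1) ∧ d ≤ c ∧
      ∀ v, ∑ u, (c - d) u v ≤ F := by
  classical
  obtain ⟨σ, hσ⟩ := exists_perm_forall_ne_zero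
    (fun u v => c u v + if u = v then F + 1 - ∑ w, c w v else 0) F.succ_pos
    (fun u => by
      simp only [sum_add_distrib, sum_ite_eq, mem_univ, if_true]
      have := hin u; have := hc.2 u; omega)
    (fun v => by
      simp only [sum_add_distrib, sum_ite_eq', mem_univ, if_true]
      have := hin v; omega)
  have hle : permFlow σ ≤ c := fun u v => by
    unfold permFlow
    split_ifs with h
    · obtain ⟨rfl, hu⟩ := h
      simpa [hu, Nat.one_le_iff_ne_zero] using hσ u
    · exact Nat.zero_le _
  refine ⟨_, isCirculation_permFlow hc hle, fun v => ?_, hle, fun v => ?_⟩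
  · rw [sum_permFlow_left]; split_ifs <;> simp
  · simp only [Pi.sub_apply]
    rw [sum_tsub_distrib _ fun u _ => hle u v, sum_permFlow_left]
    have := hin v
    split_ifs with hv
    · -- a fixed point of `σ` is matched to its own slack, since `G` has no loops
      have h := hσ v
      rw [hv, if_pos rfl, hc.1 v v (G.irrefl)] at h
      omega
    · omega

end IsCirculation

theorem circulation_decomposition_general {V : Type*} [Fintype V] (G : SimpleGraph V)
    (f : ℕ) (c : V → V → ℕ) (hc : IsCirculation G c)
    (hin : ∀ v, ∑ u, c u v ≤ f) :
    ∃ cs : Fin f → V → V → ℕ,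
      (∀ i, IsCirculation G (cs i)) ∧
      (∀ i v, ∑ u, cs i u v ≤ 1) ∧
      (∀ u v, c u v = ∑ i, cs i u v) := by
  induction f generalizing c with
  | zero =>
    refine ⟨Fin.elim0, fun i => i.elim0, fun i => i.elim0, fun u v => ?_⟩
    simpa using sum_eq_zero_iff.1 (Nat.le_zero.1 (hin v)) u (mem_univ u)
  | succ n ih =>
    obtain ⟨d, hd, hd₁, hdc, hrest⟩ := hc.exists_unit_le_of_inflow_le hin
    obtain ⟨cs, hcs, hcs₁, hsum⟩ := ih (c - d) (hc.tsub hd hdc) hrest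
    refine ⟨Fin.cons d cs, Fin.forall_fin_succ.2 ⟨hd, hcs⟩,
      Fin.forall_fin_succ.2 ⟨hd₁, hcs₁⟩, fun u v => ?_⟩
    rw [Fin.sum_univ_succ, Fin.cons_zero]
    simp only [Fin.cons_succ, ← hsum, Pi.sub_apply]
    exact (add_tsub_cancel_of_le (hdc u v)).symm

/-- Circulation decomposition: a circulation with in-flow at most `f ≥ 1` at
every vertex decomposes into `f` unit circulations (circulations with in-flow
at most 1 at every vertex). -/
theorem circulation_decomposition {V : Type*} [Fintype V] (G : SimpleGraph V)
    (f : ℕ) (hf : 1 ≤ f) (c : V → V → ℕ) (hc : IsCirculation G c)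
    (hin : ∀ v, ∑ u, c u v ≤ f) :
    ∃ cs : Fin f → V → V → ℕ,
      (∀ i, IsCirculation G (cs i)) ∧
      (∀ i v, ∑ u, cs i u v ≤ 1) ∧
      (∀ u v, c u v = ∑ i, cs i u v) :=
  circulation_decomposition_general G f c hc hin
end

section
/- Vertex-disjoint routing through a 2D grid: let d ≥ 2 and let G be the d × d grid graph. For every n with 1 ≤ n ≤ d, every set S of n vertices in the top row (second coordinate 0) and every set T of n vertices in the bottom row (second coordinate d−1), there exist n pairwise vertex-disjoint paths in G, each joining a vertex of S to a vertex of T, such that every vertex of S and every vertex of T is an endpoint of exactly one of the paths. -/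
open SimpleGraph

namespace SimpleGraph

variable {V : Type*} {G : SimpleGraph V}

lemma exists_isPath_support_subset_of_reflTransGen {s : Set V} {u v : V} (hu : u ∈ s)
    (h : Relation.ReflTransGen (fun x y => G.Adj x y ∧ y ∈ s) u v) :
    ∃ p : G.Walk u v, p.IsPath ∧ ∀ x ∈ p.support, x ∈ s := by
  classical
  suffices ∃ p : G.Walk u v, ∀ x ∈ p.support, x ∈ s by
    obtain ⟨p, hp⟩ := this
    exact ⟨p.bypass, p.bypass_isPath, fun x hx => hp x (p.support_bypass_subset_support hx)⟩
  induction h with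
  | refl => exact ⟨.nil, by simpa⟩
  | tail _ hyz ih =>
    obtain ⟨p, hp⟩ := ih
    refine ⟨p.concat hyz.1, fun x hx => ?_⟩
    rw [Walk.support_concat, List.mem_append, List.mem_singleton] at hx
    rcases hx with hx | rfl
    exacts [hp x hx, hyz.2]

lemma reflTransGen_adj_mem_of_image_uIcc_subset {α : Type*} [LinearOrder α] [SuccOrder α]
    [IsSuccArchimedean α] (f : hasse α →g G) {a b : α} {s : Set V} (hs : f '' Set.uIcc a b ⊆ s) :
    Relation.ReflTransGen (fun x y => G.Adj x y ∧ y ∈ s) (f a) (f b) := by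
  have h : Relation.ReflTransGen (fun i j => (hasse α).Adj i j ∧ j ∈ Set.uIcc a b) a b := by
    refine reflTransGen_of_succ _
      (fun i hi => ⟨Or.inl (Order.covBy_succ_of_not_isMax hi.2.not_isMax), ?_⟩)
      (fun i hi => ⟨Or.inr (Order.covBy_succ_of_not_isMax hi.2.not_isMax), ?_⟩)
    · exact Set.mem_uIcc.2 (Or.inl ⟨hi.1.trans (Order.le_succ i), Order.succ_le_of_lt hi.2⟩)
    · exact Set.mem_uIcc.2 (Or.inr ⟨hi.1, hi.2.le⟩)
  exact h.lift f fun i j hij => ⟨f.map_adj hij.1, hs (Set.mem_image_of_mem f hij.2)⟩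

end SimpleGraph

lemma exists_rank {ι β : Type*} [Fintype ι] [LinearOrder β] {f : ι → β}
    (hf : Function.Injective f) :
    ∃ g : ι → ℕ, (∀ i, g i < Fintype.card ι) ∧ ∀ i j, g i < g j ↔ f i < f j := by
  classical
  have hcard : (Finset.univ.image f).card = Fintype.card ι := Finset.card_image_of_injective _ hf
  let e := (Finset.univ.image f).orderIsoOfFin hcard
  refine ⟨fun i => e.symm ⟨f i, Finset.mem_image_of_mem f (Finset.mem_univ i)⟩,
    fun i => Fin.is_lt _, fun i j => ?_⟩
  rw [← Fin.lt_def, e.symm.lt_iff_lt, Subtype.mk_lt_mk]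

lemma exists_turning_rows {β : Type*} [LinearOrder β] {n : ℕ} {a b : Fin n → β}
    (ha : StrictMono a) (hb : StrictMono b) :
    ∃ k : Fin n → ℕ, (∀ i, k i < n) ∧ Function.Injective k ∧
      ∀ i j, i < j → (k i < k j → b i < a j) ∧ (k j < k i → a i < b j) := by
  have hkey_inj : Function.Injective fun i : Fin n => if b i ≤ a i then (i : ℕ) else 2 * n - i := by
    intro i j h
    have := i.isLt
    have := j.isLt
    dsimp only at h
    split_ifs at h <;> omega
  obtain ⟨k, hkn, hk⟩ := exists_rank hkey_inj
  refine ⟨k, fun i => Fintype.card_fin n ▸ hkn i, fun i j h => ?_, fun i j hij => ?_⟩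
  · refine hkey_inj (le_antisymm ?_ ?_) <;> rw [← not_lt, ← hk] <;> omega
  have := Fin.lt_def.1 hij
  have := j.isLt
  by_cases hba : b i ≤ a i
  · refine ⟨fun _ => hba.trans_lt (ha hij), fun hlt => absurd ((hk j i).1 hlt) ?_⟩
    simp only [hba, if_true]
    split_ifs <;> omega
  · refine ⟨fun hlt => absurd ((hk i j).1 hlt) ?_, fun _ => (not_le.1 hba).trans (hb hij)⟩
    simp only [hba, if_false]
    split_ifs <;> omega

namespace Grid2

variable {m₁ m₂ : ℕ}

def vertHom (x : Fin m₁) : pathGraph m₂ →g Grid2 m₁ m₂ where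
  toFun y := (x, y)
  map_rel' {y y'} h := Or.inr ⟨rfl, by rw [pathGraph_adj] at h; dsimp only; omega⟩

def horizHom (y : Fin m₂) : pathGraph m₁ →g Grid2 m₁ m₂ where
  toFun x := (x, y)
  map_rel' {x x'} h := Or.inl ⟨by rw [pathGraph_adj] at h; dsimp only; omega, rfl⟩

def staircase (a b : Fin m₁) (k : Fin m₂) : Set (Fin m₁ × Fin m₂) :=
  {v | v.1 = a ∧ v.2 ≤ k ∨ v.2 = k ∧ v.1 ∈ Set.uIcc a b ∨ v.1 = b ∧ k ≤ v.2}

lemma exists_isPath_subset_staircase (a b : Fin m₁) {k r₀ r₁ : Fin m₂} (h₀ : r₀ ≤ k)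
    (h₁ : k ≤ r₁) :
    ∃ p : (Grid2 m₁ m₂).Walk (a, r₀) (b, r₁), p.IsPath ∧ ∀ v ∈ p.support, v ∈ staircase a b k := by
  refine exists_isPath_support_subset_of_reflTransGen (Or.inl ⟨rfl, h₀⟩) ?_
  have down₁ := reflTransGen_adj_mem_of_image_uIcc_subset (s := staircase a b k) (vertHom a)
    (a := r₀) (b := k) <| by
      rintro _ ⟨y, hy, rfl⟩
      exact Or.inl ⟨rfl, (Set.uIcc_of_le h₀ ▸ hy).2⟩
  have across := reflTransGen_adj_mem_of_image_uIcc_subset (s := staircase a b k) (horizHom k)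
    (a := a) (b := b) <| by
      rintro _ ⟨x, hx, rfl⟩
      exact Or.inr (Or.inl ⟨rfl, hx⟩)
  have down₂ := reflTransGen_adj_mem_of_image_uIcc_subset (s := staircase a b k) (vertHom b)
    (a := k) (b := r₁) <| by
      rintro _ ⟨y, hy, rfl⟩
      exact Or.inr (Or.inr ⟨rfl, (Set.uIcc_of_le h₁ ▸ hy).1⟩)
  exact (down₁.trans across).trans down₂

lemma disjoint_staircase {a a' b b' : Fin m₁} {k k' : Fin m₂} (ha : a < a') (hb : b < b')
    (hk : k ≠ k') (h₁ : k < k' → b < a') (h₂ : k' < k → a < b') :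
    Disjoint (staircase a b k) (staircase a' b' k') := by
  rw [Set.disjoint_left]
  rintro ⟨x, y⟩ h h'
  simp only [staircase, Set.mem_ofPred_eq, Set.mem_uIcc, Fin.ext_iff, Fin.le_iff_val_le_val,
    Fin.lt_def] at *
  omega

theorem exists_disjoint_paths {n : ℕ} {a b : Fin n → Fin m₁} (ha : StrictMono a)
    (hb : StrictMono b) {r₀ r₁ : Fin m₂} (hr : (r₀ : ℕ) + n ≤ r₁ + 1) :
    ∃ w : (i : Fin n) → (Grid2 m₁ m₂).Walk (a i, r₀) (b i, r₁), (∀ i, (w i).IsPath) ∧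
      ∀ i j, i ≠ j → ∀ v ∈ (w i).support, v ∉ (w j).support := by
  obtain ⟨k, hkn, hk_inj, hk⟩ := exists_turning_rows ha hb
  let row (i : Fin n) : Fin m₂ := ⟨r₀ + k i, by have := hkn i; omega⟩
  have hrow_lt {i j : Fin n} : row i < row j ↔ k i < k j := by
    rw [Fin.lt_def]
    exact Nat.add_lt_add_iff_left
  choose w hw hsub using fun i => exists_isPath_subset_staircase (a i) (b i)
    (show r₀ ≤ row i from Fin.le_def.2 (Nat.le_add_right _ _))
    (show row i ≤ r₁ from Fin.le_def.2 (show r₀ + k i ≤ r₁ by have := hkn i; omega))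
  have hdisj {i j : Fin n} (hij : i < j) :
      Disjoint (staircase (a i) (b i) (row i)) (staircase (a j) (b j) (row j)) :=
    disjoint_staircase (ha hij) (hb hij)
      (fun h => hij.ne (hk_inj (Nat.add_left_cancel (congrArg Fin.val h))))
      (fun h => (hk i j hij).1 (hrow_lt.1 h)) (fun h => (hk i j hij).2 (hrow_lt.1 h))
  refine ⟨w, hw, fun i j hij v hvi hvj => ?_⟩
  rcases hij.lt_or_gt with h | h
  · exact Set.disjoint_left.1 (hdisj h) (hsub i v hvi) (hsub j v hvj)
  · exact Set.disjoint_left.1 (hdisj h) (hsub j v hvj) (hsub i v hvi)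

end Grid2

lemma Finset.exists_equiv_strictMono_of_forall_snd_eq {α β : Type*} [LinearOrder α]
    {S : Finset (α × β)} {n : ℕ} {y : β} (hS : S.card = n) (hy : ∀ v ∈ S, v.2 = y) :
    ∃ (a : Fin n → α) (e : Fin n ≃ S), StrictMono a ∧ ∀ i, (e i : α × β) = (a i, y) := by
  classical
  have hinj : Set.InjOn Prod.fst (S : Set (α × β)) :=
    fun v hv w hw h => Prod.ext h ((hy v hv).trans (hy w hw).symm)
  have hcard : (S.image Prod.fst).card = n := (Finset.card_image_of_injOn hinj).trans hS
  let a := (S.image Prod.fst).orderEmbOfFin hcard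
  have mem (i : Fin n) : (a i, y) ∈ S := by
    obtain ⟨v, hv, hva⟩ := Finset.mem_image.1 ((S.image Prod.fst).orderEmbOfFin_mem hcard i)
    rwa [← hva, ← hy v hv]
  let e (i : Fin n) : S := ⟨(a i, y), mem i⟩
  have he : Function.Bijective e := by
    rw [Fintype.bijective_iff_injective_and_card]
    exact ⟨fun i j h => a.injective (congrArg (fun v : S => (v : α × β).1) h), by simp [hS]⟩
  exact ⟨a, Equiv.ofBijective e he, a.strictMono, fun _ => rfl⟩

theorem grid2_vertex_disjoint_routing_general (d : ℕ) (hd : 2 ≤ d) (n : ℕ)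
    (hnd : n ≤ d) (S T : Finset (Fin d × Fin d))
    (hScard : S.card = n) (hTcard : T.card = n)
    (hStop : ∀ v ∈ S, (v.2 : ℕ) = 0) (hTbot : ∀ v ∈ T, (v.2 : ℕ) = d - 1) :
    ∃ σ : S → T, Function.Bijective σ ∧
      ∃ w : (s : S) → (Grid2 d d).Walk s.1 (σ s).1,
        (∀ s, (w s).IsPath) ∧
        (∀ s s' : S, s ≠ s' → ∀ v, v ∈ (w s).support → v ∉ (w s').support) := by
  let top : Fin d := ⟨0, by omega⟩
  let bottom : Fin d := ⟨d - 1, by omega⟩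
  obtain ⟨a, eS, ha, heS⟩ := Finset.exists_equiv_strictMono_of_forall_snd_eq (y := top) hScard
    fun v hv => Fin.ext (hStop v hv)
  obtain ⟨b, eT, hb, heT⟩ := Finset.exists_equiv_strictMono_of_forall_snd_eq (y := bottom) hTcard
    fun v hv => Fin.ext (hTbot v hv)
  obtain ⟨w, hpath, hdisj⟩ :=
    Grid2.exists_disjoint_paths ha hb (r₀ := top) (r₁ := bottom) (show 0 + n ≤ d - 1 + 1 by omega)
  refine ⟨eS.symm.trans eT, Equiv.bijective _,
    fun s => (w (eS.symm s)).copy (by rw [← heS, eS.apply_symm_apply]) (heT _).symm,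
    fun s => (Walk.isPath_copy _ _ _).2 (hpath _), fun s s' hss' v hv hv' => ?_⟩
  exact hdisj _ _ (eS.symm.injective.ne hss') v (by simpa using hv) (by simpa using hv')

/-- Vertex-disjoint routing through a 2D grid: `n ≤ d` robots in the top row
of the `d × d` grid can be connected to any `n` target vertices in the bottom
row by pairwise vertex-disjoint paths. -/
theorem grid2_vertex_disjoint_routing (d : ℕ) (hd : 2 ≤ d) (n : ℕ)
    (hn1 : 1 ≤ n) (hnd : n ≤ d) (S T : Finset (Fin d × Fin d))
    (hScard : S.card = n) (hTcard : T.card = n)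
    (hStop : ∀ v ∈ S, (v.2 : ℕ) = 0) (hTbot : ∀ v ∈ T, (v.2 : ℕ) = d - 1) :
    ∃ σ : S → T, Function.Bijective σ ∧
      ∃ w : (s : S) → (Grid2 d d).Walk s.1 (σ s).1,
        (∀ s, (w s).IsPath) ∧
        (∀ s s' : S, s ≠ s' → ∀ v, v ∈ (w s).support → v ∉ (w s').support) :=
  grid2_vertex_disjoint_routing_general d hd n hnd S T hScard hTcard hStop hTbot
end

section
/- Boundary-crossing bounds for the cell partition: let d ≥ 1 and q_1, q_2 ≥ 1 be integers, let G be the 5q_1d × 5q_2d grid graph, and partition its vertices into 5d × 5d cells by cell(x,y) = (⌊x/(5d)⌋, ⌊y/(5d)⌋). Let p = (G, X_I, X_G) be an MPP instance with d_g(p) ≤ d. Then: (i) for every robot i, cell(X_I(i)) and cell(X_G(i)) are equal or adjacent as cells (each coordinate of the two cell indices differs by at most 1); (ii) for any two cells c ≠ c' that are orthogonally adjacent (cell indices differing by 1 in exactly one coordinate), the number of robots i with cell(X_I(i)) = c and cell(X_G(i)) = c' is at most 5d²; (iii) for any two diagonally adjacent cells c, c' (cell indices differing by 1 in both coordinates),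 the number of robots i with cell(X_I(i)) = c and cell(X_G(i)) = c' is at most d². -/
/-- The `5d × 5d` cell containing a vertex of the grid. -/
def cell5 (d : ℕ) {m₁ m₂ : ℕ} (v : Fin m₁ × Fin m₂) : ℕ × ℕ :=
  ((v.1 : ℕ) / (5 * d), (v.2 : ℕ) / (5 * d))

/-- Two cell indices are orthogonally adjacent: they differ by 1 in exactly
one coordinate. -/
def OrthAdjCell (c c' : ℕ × ℕ) : Prop :=
  (c.1 = c'.1 ∧ ((c.2 : ℤ) - (c'.2 : ℤ)).natAbs = 1) ∨
  (((c.1 : ℤ) - (c'.1 : ℤ)).natAbs = 1 ∧ c.2 = c'.2)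

/-- Two cell indices are diagonally adjacent: they differ by 1 in both
coordinates. -/
def DiagAdjCell (c c' : ℕ × ℕ) : Prop :=
  ((c.1 : ℤ) - (c'.1 : ℤ)).natAbs = 1 ∧ ((c.2 : ℤ) - (c'.2 : ℤ)).natAbs = 1

/-!
The grid is the box product of two path graphs, so a walk of length at most `d` moves each
coordinate by at most `d`, hence by at most one cell of width `5d`. Along a coordinate in which the initial and goal cells differ, the
initial position therefore lies in a strip of width `d` along the common boundary; in a coordinate
in which they agree it is confined to the `5d` values of the cell. Since initial positions are
distinct, the number of such robots is at most the product of the two ranges: `5d · d` for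
orthogonally and `d · d` for diagonally adjacent cells.
-/

open SimpleGraph Finset Function

theorem grid2_eq_boxProd (m₁ m₂ : ℕ) : Grid2 m₁ m₂ = pathGraph m₁ □ pathGraph m₂ := by
  ext x y
  simp only [Grid2, boxProd_adj, pathGraph_adj, Fin.ext_iff]
  omega

theorem pathGraph_natAbs_sub_le_length {n : ℕ} {u v : Fin n} (w : (pathGraph n).Walk u v) :
    ((u : ℤ) - v).natAbs ≤ w.length := by
  induction w with
  | nil => simp
  | cons h _ ih =>
    rw [pathGraph_adj] at h
    rw [Walk.length_cons]
    omega

theorem Grid2.natAbs_sub_add_natAbs_sub_le_dist {m₁ m₂ : ℕ} (x y : Fin m₁ × Fin m₂) :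
    ((x.1 : ℤ) - y.1).natAbs + ((x.2 : ℤ) - y.2).natAbs ≤ (Grid2 m₁ m₂).dist x y := by
  classical
  rw [grid2_eq_boxProd]
  obtain ⟨w, hw⟩ :=
    ((pathGraph_preconnected m₁).boxProd (pathGraph_preconnected m₂) x y).exists_walk_length_eq_dist
  rw [← hw, Walk.length_boxProd]
  exact add_le_add (pathGraph_natAbs_sub_le_length w.ofBoxProdLeft)
    (pathGraph_natAbs_sub_le_length w.ofBoxProdRight)

theorem Nat.natAbs_div_sub_div_le_one {L y z : ℕ} (h : ((y : ℤ) - z).natAbs ≤ L) :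
    (((y / L : ℕ) : ℤ) - (z / L : ℕ)).natAbs ≤ 1 := by
  rcases Nat.eq_zero_or_pos L with rfl | hL
  · simp
  have h₁ : y / L ≤ z / L + 1 :=
    calc y / L ≤ (z + L) / L := Nat.div_le_div_right (by omega)
      _ = z / L + 1 := Nat.add_div_right z hL
  have h₂ : z / L ≤ y / L + 1 :=
    calc z / L ≤ (y + L) / L := Nat.div_le_div_right (by omega)
      _ = y / L + 1 := Nat.add_div_right y hL
  omega

/-- The values a coordinate can take at the start if it lies in the block `[L b, L b + L)` and ends,
after moving at most `k`, in the block `[L b', L b' + L)`. -/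
def crossingRange (L k b b' : ℕ) : Finset ℕ :=
  if b < b' then Ico (L * b' - k) (L * b')
  else if b' < b then Ico (L * b) (L * b + k)
  else Ico (L * b) (L * b + L)

theorem mem_crossingRange {L k y z : ℕ} (hL : 0 < L) (hyz : ((y : ℤ) - z).natAbs ≤ k) :
    y ∈ crossingRange L k (y / L) (z / L) := by
  have hy := Nat.mul_div_le y L
  have hy' := Nat.mul_add_one L (y / L) ▸ Nat.lt_mul_div_succ y hL
  have hz := Nat.mul_div_le z L
  have hz' := Nat.mul_add_one L (z / L) ▸ Nat.lt_mul_div_succ z hL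
  unfold crossingRange
  split_ifs with hlt hgt <;> rw [mem_Ico]
  · have := Nat.mul_add_one L (y / L) ▸ Nat.mul_le_mul_left L hlt
    omega
  · have := Nat.mul_add_one L (z / L) ▸ Nat.mul_le_mul_left L hgt
    omega
  · omega

theorem card_crossingRange_le_of_ne {L k b b' : ℕ} (h : b ≠ b') :
    (crossingRange L k b b').card ≤ k := by
  unfold crossingRange
  split_ifs <;> simp only [Nat.card_Ico] <;> omega

theorem card_crossingRange_self (L k b : ℕ) : (crossingRange L k b b).card = L := by
  simp [crossingRange]

theorem card_filter_le_card_mul_card_of_mapsTo {α : Type*} [Fintype α] {m₁ m₂ : ℕ}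
    {X : α → Fin m₁ × Fin m₂} (hX : Injective X) {p : α → Prop} [DecidablePred p]
    {S₁ S₂ : Finset ℕ} (h : ∀ i, p i → ((X i).1 : ℕ) ∈ S₁ ∧ ((X i).2 : ℕ) ∈ S₂) :
    (univ.filter p).card ≤ S₁.card * S₂.card := by
  rw [← card_product]
  refine card_le_card_of_injOn (fun i => (((X i).1 : ℕ), ((X i).2 : ℕ))) ?_ ?_
  · intro i hi
    exact mem_product.2 (h i (mem_filter.1 hi).2)
  · intro i _ j _ hij
    simp only [Prod.mk.injEq, ← Fin.ext_iff] at hij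
    exact hX (Prod.ext hij.1 hij.2)

theorem card_cellCrossing_le {α : Type*} [Fintype α] {m₁ m₂ d k : ℕ} (hd : 0 < d)
    {XI XG : α → Fin m₁ × Fin m₂} (hXI : Injective XI)
    (hgap : ∀ i, (((XI i).1 : ℤ) - (XG i).1).natAbs ≤ k ∧ (((XI i).2 : ℤ) - (XG i).2).natAbs ≤ k)
    (c c' : ℕ × ℕ) :
    (univ.filter fun i => cell5 d (XI i) = c ∧ cell5 d (XG i) = c').card ≤
      (crossingRange (5 * d) k c.1 c'.1).card * (crossingRange (5 * d) k c.2 c'.2).card := by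
  refine card_filter_le_card_mul_card_of_mapsTo hXI ?_
  rintro i ⟨rfl, rfl⟩
  exact ⟨mem_crossingRange (by omega) (hgap i).1, mem_crossingRange (by omega) (hgap i).2⟩

theorem cell_partition_boundary_crossing_bounds_general
    (d q₁ q₂ : ℕ) (hd : 1 ≤ d)
    (XI XG : Equiv.Perm (Fin (5 * q₁ * d) × Fin (5 * q₂ * d)))
    (hgap : ∀ v, (Grid2 (5 * q₁ * d) (5 * q₂ * d)).dist (XI v) (XG v) ≤ d) :
    (∀ i, (((cell5 d (XI i)).1 : ℤ) - ((cell5 d (XG i)).1 : ℤ)).natAbs ≤ 1 ∧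
          (((cell5 d (XI i)).2 : ℤ) - ((cell5 d (XG i)).2 : ℤ)).natAbs ≤ 1) ∧
    (∀ c c' : ℕ × ℕ, OrthAdjCell c c' →
      (Finset.univ.filter fun i => cell5 d (XI i) = c ∧ cell5 d (XG i) = c').card
        ≤ 5 * d ^ 2) ∧
    (∀ c c' : ℕ × ℕ, DiagAdjCell c c' →
      (Finset.univ.filter fun i => cell5 d (XI i) = c ∧ cell5 d (XG i) = c').card
        ≤ d ^ 2) := by
  have hcoord : ∀ i, (((XI i).1 : ℤ) - (XG i).1).natAbs ≤ d ∧
      (((XI i).2 : ℤ) - (XG i).2).natAbs ≤ d := fun i => by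
    have := (Grid2.natAbs_sub_add_natAbs_sub_le_dist (XI i) (XG i)).trans (hgap i)
    omega
  have hcount := card_cellCrossing_le hd XI.injective hcoord
  refine ⟨fun i => ?_, ?_, ?_⟩
  · have := hcoord i
    exact ⟨Nat.natAbs_div_sub_div_le_one (by omega), Nat.natAbs_div_sub_div_le_one (by omega)⟩
  · rintro c c' (⟨h₁, h₂⟩ | ⟨h₁, h₂⟩)
    · calc _ ≤ _ := hcount c c'
        _ ≤ 5 * d * d := by
          rw [h₁, card_crossingRange_self]
          gcongr
          exact card_crossingRange_le_of_ne (by omega)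
        _ = 5 * d ^ 2 := by ring
    · calc _ ≤ _ := hcount c c'
        _ ≤ d * (5 * d) := by
          rw [h₂, card_crossingRange_self]
          gcongr
          exact card_crossingRange_le_of_ne (by omega)
        _ = 5 * d ^ 2 := by ring
  · rintro c c' ⟨h₁, h₂⟩
    calc _ ≤ _ := hcount c c'
      _ ≤ d * d := by
        gcongr <;> exact card_crossingRange_le_of_ne (by omega)
      _ = d ^ 2 := by ring

/-- Boundary-crossing bounds for the `5d × 5d` cell partition of a
`5q₁d × 5q₂d` grid, for an instance of distance gap at most `d`:
(i) each robot's initial and goal cells agree or are (diagonally) adjacent;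
(ii) at most `5d²` robots cross between two orthogonally adjacent cells;
(iii) at most `d²` robots cross between two diagonally adjacent cells. -/
theorem cell_partition_boundary_crossing_bounds
    (d q₁ q₂ : ℕ) (hd : 1 ≤ d) (hq₁ : 1 ≤ q₁) (hq₂ : 1 ≤ q₂)
    (XI XG : Equiv.Perm (Fin (5 * q₁ * d) × Fin (5 * q₂ * d)))
    (hgap : ∀ v, (Grid2 (5 * q₁ * d) (5 * q₂ * d)).dist (XI v) (XG v) ≤ d) :
    (∀ i, (((cell5 d (XI i)).1 : ℤ) - ((cell5 d (XG i)).1 : ℤ)).natAbs ≤ 1 ∧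
          (((cell5 d (XI i)).2 : ℤ) - ((cell5 d (XG i)).2 : ℤ)).natAbs ≤ 1) ∧
    (∀ c c' : ℕ × ℕ, OrthAdjCell c c' →
      (Finset.univ.filter fun i => cell5 d (XI i) = c ∧ cell5 d (XG i) = c').card
        ≤ 5 * d ^ 2) ∧
    (∀ c c' : ℕ × ℕ, DiagAdjCell c c' →
      (Finset.univ.filter fun i => cell5 d (XI i) = c ∧ cell5 d (XG i) = c').card
        ≤ d ^ 2) :=
  cell_partition_boundary_crossing_bounds_general d q₁ q₂ hd XI XG hgap
end
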